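/- Let (t, s) be an affine point of E with s ≠ 0, and define ε₁(x, y) = (t·y − s·x)/(y − s) for affine points of E with y ≠ s. Then for any two affine points P = (x₁, y₁) and Q = (x₂, y₂) of E with y₁ ≠ s and y₂ ≠ s, one has ε₁(P) = ε₁(Q) if and only if Q = P or Q = −(P + (t, s)), where + is the group law of E and − is negation. In other words, ε₁ is 2:1 with fibers {P, i_{t₁}(P)}, where i_{t₁}(P) = −(P + (t, s)). -/

import Mathlib

/-!
`(t·y − s·x)/(y − s)` is the abscissa where the line through `T = (t, s)` and `(x, y)` meets the
`x`-axis. Since `s ≠ 0`, `T` is off that axis, so `ε₁(P) = ε₁(Q)` exactly when `P`, `Q`, `T` are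
collinear. The line through `T` and `P ≠ T` meets the curve exactly in `P`, `T` and `−(P + T)`
(the last being the point at infinity when the line is vertical), and `Q ≠ T` because `y₂ ≠ s`.
-/

/-- The elliptic curve `E : y² = x(x − 1)(x − λ)`, i.e. `y² = x³ − (1 + λ)x² + λx`,
in Weierstrass form. -/
noncomputable def E (l : ℂ) : WeierstrassCurve.Affine ℂ :=
  { a₁ := 0, a₂ := -(1 + l), a₃ := 0, a₄ := l, a₆ := 0 }

open Polynomial

namespace WeierstrassCurve.Affine

variable {F : Type*} [Field F] {W : WeierstrassCurve.Affine F}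

lemma eval_addPolynomial_eq_zero {x₀ y₀ ℓ x y : F} (h : W.Equation x y)
    (hy : y = (linePolynomial x₀ y₀ ℓ).eval x) : (W.addPolynomial x₀ y₀ ℓ).eval x = 0 := by
  have key := congrArg (evalEval x y) (W.C_addPolynomial x₀ y₀ ℓ)
  rw [evalEval_C, evalEval_add, evalEval_mul, evalEval_sub, evalEval_X, evalEval_C, ← hy,
    sub_self, zero_mul, zero_add] at key
  exact key.trans h

lemma eval_linePolynomial_eq_iff {x₁ y₁ x₂ y₂ x y : F} (hx : x₁ ≠ x₂) :
    y = (linePolynomial x₁ y₁ ((y₁ - y₂) / (x₁ - x₂))).eval x ↔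
      (x₁ - x₂) * (y - y₂) = (x - x₂) * (y₁ - y₂) := by
  have hx' : x₁ - x₂ ≠ 0 := sub_ne_zero.2 hx
  simp only [linePolynomial, eval_add, eval_mul, eval_C, eval_sub, eval_X]
  constructor <;> intro h
  · rw [h]; field_simp; ring
  · field_simp; linear_combination h

variable [DecidableEq F]

lemma X_eq_of_mem_line {x₁ y₁ x₂ y₂ x y : F} (h₁ : W.Equation x₁ y₁) (h₂ : W.Equation x₂ y₂)
    (hx : x₁ ≠ x₂) (h : W.Equation x y)
    (hy : y = (linePolynomial x₁ y₁ (W.slope x₁ x₂ y₁ y₂)).eval x) :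
    x = x₁ ∨ x = x₂ ∨ x = W.addX x₁ x₂ (W.slope x₁ x₂ y₁ y₂) := by
  have key := eval_addPolynomial_eq_zero h hy
  rw [addPolynomial_slope h₁ h₂ fun h => hx h.1] at key
  simpa [sub_eq_zero, or_assoc] using key

namespace Point

lemma eq_or_eq_neg_add_iff_of_X_eq {x₁ y₁ x₂ y₂ t s : F} (hP : W.Nonsingular x₁ y₁)
    (hQ : W.Nonsingular x₂ y₂) (hT : W.Nonsingular t s) (hy₁ : y₁ ≠ s) (hy₂ : y₂ ≠ s)
    (hx : x₁ = t) :
    some _ _ hQ = some _ _ hP ∨ some _ _ hQ = -(some _ _ hP + some _ _ hT) ↔ x₂ = t := by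
  have hy₁' := (Y_eq_of_X_eq hP.1 hT.1 hx).resolve_left hy₁
  rw [add_of_Y_eq hx hy₁', neg_zero, or_iff_left (some_ne_zero hQ), some.injEq]
  refine ⟨fun h => h.1.trans hx, fun hx₂ => ⟨hx₂.trans hx.symm, ?_⟩⟩
  rw [(Y_eq_of_X_eq hQ.1 hT.1 hx₂).resolve_left hy₂, hy₁']

lemma eq_or_eq_neg_add_iff_of_X_ne {x₁ y₁ x₂ y₂ t s : F} (hP : W.Nonsingular x₁ y₁)
    (hQ : W.Nonsingular x₂ y₂) (hT : W.Nonsingular t s) (hy₂ : y₂ ≠ s) (hx : x₁ ≠ t) :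
    some _ _ hQ = some _ _ hP ∨ some _ _ hQ = -(some _ _ hP + some _ _ hT) ↔
      y₂ = (linePolynomial x₁ y₁ (W.slope x₁ t y₁ s)).eval x₂ := by
  rw [add_of_X_ne' hx, neg_neg, some.injEq, some.injEq]
  constructor
  · rintro (⟨rfl, rfl⟩ | ⟨rfl, rfl⟩) <;> simp [linePolynomial]
  · intro hy
    rcases X_eq_of_mem_line hP.1 hT.1 hx hQ.1 hy with rfl | rfl | rfl
    · simp [hy, linePolynomial]
    · rw [slope_of_X_ne hx, eval_linePolynomial_eq_iff hx, sub_self, zero_mul,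
        mul_eq_zero, sub_eq_zero, sub_eq_zero] at hy
      exact absurd (hy.resolve_left hx) hy₂
    · simp [hy, linePolynomial]

theorem eq_or_eq_neg_add_iff_collinear {x₁ y₁ x₂ y₂ t s : F} (hP : W.Nonsingular x₁ y₁)
    (hQ : W.Nonsingular x₂ y₂) (hT : W.Nonsingular t s) (hy₁ : y₁ ≠ s) (hy₂ : y₂ ≠ s) :
    some _ _ hQ = some _ _ hP ∨ some _ _ hQ = -(some _ _ hP + some _ _ hT) ↔
      (x₁ - t) * (y₂ - s) = (x₂ - t) * (y₁ - s) := by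
  by_cases hx : x₁ = t
  · rw [eq_or_eq_neg_add_iff_of_X_eq hP hQ hT hy₁ hy₂ hx, hx, sub_self, zero_mul,
      zero_eq_mul, or_iff_left (sub_ne_zero.2 hy₁), sub_eq_zero]
  · rw [eq_or_eq_neg_add_iff_of_X_ne hP hQ hT hy₂ hx, slope_of_X_ne hx,
      eval_linePolynomial_eq_iff hx]

end Point

end WeierstrassCurve.Affine

lemma xIntercept_eq_xIntercept_iff {F : Type*} [Field F] {t s x₁ y₁ x₂ y₂ : F} (hs : s ≠ 0)
    (hy₁ : y₁ ≠ s) (hy₂ : y₂ ≠ s) :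
    (t * y₁ - s * x₁) / (y₁ - s) = (t * y₂ - s * x₂) / (y₂ - s) ↔
      (x₁ - t) * (y₂ - s) = (x₂ - t) * (y₁ - s) := by
  rw [div_eq_div_iff (sub_ne_zero.2 hy₁) (sub_ne_zero.2 hy₂)]
  constructor <;> intro h
  · exact mul_left_cancel₀ hs (by linear_combination -h)
  · linear_combination -s * h

theorem epsilon_one_two_to_one (l : ℂ)
    (t s : ℂ) (hs : s ≠ 0) (hT : (E l).Nonsingular t s)
    (x₁ y₁ x₂ y₂ : ℂ) (hy₁ : y₁ ≠ s) (hy₂ : y₂ ≠ s)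
    (hP : (E l).Nonsingular x₁ y₁) (hQ : (E l).Nonsingular x₂ y₂) :
    (t * y₁ - s * x₁) / (y₁ - s) = (t * y₂ - s * x₂) / (y₂ - s) ↔
      (WeierstrassCurve.Affine.Point.some _ _ hQ = WeierstrassCurve.Affine.Point.some _ _ hP ∨
        WeierstrassCurve.Affine.Point.some _ _ hQ =
          -(WeierstrassCurve.Affine.Point.some _ _ hP + WeierstrassCurve.Affine.Point.some _ _ hT)) := by
  rw [xIntercept_eq_xIntercept_iff hs hy₁ hy₂,
    WeierstrassCurve.Affine.Point.eq_or_eq_neg_add_iff_collinear hP hQ hT hy₁ hy₂]
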